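/- For every real number θ, define ECR^{θ/π} = exp(iθ(σx⊗σz)/8) · (I⊗X) · exp(−iθ(σx⊗σz)/8). Then (I⊗X) · ECR^{θ/π} · (exp(iθσx/4) ⊗ exp(iθσz/4)) = e^{iθ/4} · C(θ), where C(θ) is the controlled operation that acts as the identity on the first tensor factor when the second factor is |0⟩ and as e^{−iθ/2}·R_X(−θ) on the first tensor factor when the second factor is |1⟩, with R_X(φ) = exp(−iφσx/2). -/

import Mathlib

/-!
Conjugating `1 ⊗ σx` past `exp (c • σx ⊗ σz)` flips the sign of the exponent, so
`(1 ⊗ σx) · ECR^{θ/π} = exp (-(iθ/4) • σx ⊗ σz)`. The matrices `σx ⊗ 1`, `1 ⊗ σz` and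
`σx ⊗ σz` commute, so the left-hand side is the exponential of
`(iθ/4) • (σx ⊗ 1 + 1 ⊗ σz - σx ⊗ σz) = (iθ/4) • 1 - iθ • (|−⟩⟨−| ⊗ |1⟩⟨1|)`.
For an idempotent `P` one has `exp (c • P) = 1 + (e^c - 1) • P`, and `C(θ)` is exactly
`1 + (e^{-iθ} - 1) • (|−⟩⟨−| ⊗ |1⟩⟨1|)`.
-/

open Matrix Complex
open scoped Matrix Kronecker

noncomputable section

/-- Pauli matrices -/
def σx : Matrix (Fin 2) (Fin 2) ℂ := !![0, 1; 1, 0]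
def σy : Matrix (Fin 2) (Fin 2) ℂ := !![0, -Complex.I; Complex.I, 0]
def σz : Matrix (Fin 2) (Fin 2) ℂ := !![1, 0; 0, -1]

/-- ECR^{θ/π} = e^{iθ(σx⊗σz)/8} (I⊗X) e^{−iθ(σx⊗σz)/8} -/
def ECRpow (θ : ℝ) : Matrix (Fin 2 × Fin 2) (Fin 2 × Fin 2) ℂ :=
  NormedSpace.exp ((Complex.I * (θ : ℂ) / 8) • (σx ⊗ₖ σz)) *
    ((1 : Matrix (Fin 2) (Fin 2) ℂ) ⊗ₖ σx) *
    NormedSpace.exp ((-(Complex.I * (θ : ℂ)) / 8) • (σx ⊗ₖ σz))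

/-- the single-qubit rotation R_X(φ) = exp(−iφσx/2) -/
def Rx (φ : ℝ) : Matrix (Fin 2) (Fin 2) ℂ :=
  NormedSpace.exp ((-(Complex.I * (φ : ℂ)) / 2) • σx)

/-- the controlled gate C(θ): identity on the first factor when the second factor is
|0⟩, and e^{−iθ/2}R_X(−θ) on the first factor when the second factor is |1⟩ -/
def Cgate (θ : ℝ) : Matrix (Fin 2 × Fin 2) (Fin 2 × Fin 2) ℂ :=
  Matrix.of fun p q =>
    if p.2 = q.2 then
      (if q.2 = 0 then (1 : Matrix (Fin 2) (Fin 2) ℂ) p.1 q.1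
       else (Complex.exp (-(Complex.I * (θ : ℂ)) / 2) • Rx (-θ)) p.1 q.1)
    else 0

theorem NormedSpace.exp_smul_of_isIdempotentElem {A : Type*} [NormedRing A]
    [NormedAlgebra ℂ A] [CompleteSpace A] {p : A} (hp : IsIdempotentElem p) (c : ℂ) :
    NormedSpace.exp (c • p) = 1 + (Complex.exp c - 1) • p := by
  have hpow : ∀ k : ℕ, (c • p) ^ (k + 1) = c ^ (k + 1) • p := fun k => by
    rw [smul_pow, hp.pow_succ_eq]
  have hsum : Summable fun k : ℕ => ((k + 1).factorial : ℂ)⁻¹ * c ^ (k + 1) :=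
    (summable_nat_add_iff 1).mpr (NormedSpace.expSeries_summable' (𝕂 := ℂ) c)
  have hexp : Complex.exp c = 1 + ∑' k : ℕ, ((k + 1).factorial : ℂ)⁻¹ * c ^ (k + 1) := by
    rw [Complex.exp_eq_exp_ℂ, congrFun (NormedSpace.exp_eq_tsum ℂ),
      (NormedSpace.expSeries_summable' c).tsum_eq_zero_add]
    simp
  rw [congrFun (NormedSpace.exp_eq_tsum ℂ),
    (NormedSpace.expSeries_summable' (c • p)).tsum_eq_zero_add]
  simp only [hpow, smul_smul, hsum.tsum_smul_const, hexp, add_sub_cancel_left]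
  simp

theorem isIdempotentElem_inv_two_smul_one_sub {A : Type*} [Ring A] [Algebra ℂ A] {x : A}
    (hx : x * x = 1) : IsIdempotentElem ((2⁻¹ : ℂ) • (1 - x)) := by
  have h : (1 - x) * (1 - x) = (2 : ℂ) • (1 - x) := by
    rw [sub_mul, one_mul, mul_sub, mul_one, hx, two_smul]
    abel
  rw [IsIdempotentElem, smul_mul_smul, h, smul_smul]
  norm_num

section Kronecker

variable {l m n p : Type*}

theorem Matrix.sub_kronecker {α : Type*} [NonUnitalNonAssocRing α] (A₁ A₂ : Matrix l m α)
    (B : Matrix n p α) : (A₁ - A₂) ⊗ₖ B = A₁ ⊗ₖ B - A₂ ⊗ₖ B := by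
  ext; simp [sub_mul]

theorem Matrix.kronecker_sub {α : Type*} [NonUnitalNonAssocRing α] (A : Matrix l m α)
    (B₁ B₂ : Matrix n p α) : A ⊗ₖ (B₁ - B₂) = A ⊗ₖ B₁ - A ⊗ₖ B₂ := by
  ext; simp [mul_sub]

theorem Matrix.kronecker_one_add_one_kronecker_sub_kronecker {α : Type*} [Ring α]
    [DecidableEq m] [DecidableEq n] (A : Matrix m m α) (B : Matrix n n α) :
    A ⊗ₖ 1 + 1 ⊗ₖ B - A ⊗ₖ B = 1 - (1 - A) ⊗ₖ (1 - B) := by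
  rw [sub_kronecker, kronecker_sub, kronecker_sub, one_kronecker_one]
  abel

theorem Commute.kronecker {α : Type*} [CommSemiring α] [Fintype m] [Fintype n]
    {A C : Matrix m m α} {B D : Matrix n n α} (hAC : Commute A C) (hBD : Commute B D) :
    Commute (A ⊗ₖ B) (C ⊗ₖ D) := by
  rw [Commute, SemiconjBy, ← mul_kronecker_mul, ← mul_kronecker_mul, hAC.eq, hBD.eq]

theorem IsIdempotentElem.kronecker {α : Type*} [CommSemiring α] [Fintype m] [Fintype n]
    {P : Matrix m m α} {Q : Matrix n n α} (hP : IsIdempotentElem P) (hQ : IsIdempotentElem Q) :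
    IsIdempotentElem (P ⊗ₖ Q) := by
  rw [IsIdempotentElem, ← mul_kronecker_mul, hP.eq, hQ.eq]

variable [Fintype m] [DecidableEq m] [Fintype n] [DecidableEq n] {𝕜 : Type*} [RCLike 𝕜]

theorem Matrix.exp_kronecker_one (A : Matrix m m 𝕜) :
    NormedSpace.exp (A ⊗ₖ (1 : Matrix n n 𝕜)) = NormedSpace.exp A ⊗ₖ 1 := by
  let f := (kroneckerAlgEquiv m n 𝕜).toAlgHom.comp Algebra.TensorProduct.includeLeft
  have hf : ∀ M, f M = M ⊗ₖ 1 := fun M => by simp [f]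
  rw [← hf, ← hf]
  open scoped Matrix.Norms.Operator in
  exact (NormedSpace.map_exp f f.toLinearMap.continuous_of_finiteDimensional A).symm

theorem Matrix.exp_one_kronecker (B : Matrix n n 𝕜) :
    NormedSpace.exp ((1 : Matrix m m 𝕜) ⊗ₖ B) = 1 ⊗ₖ NormedSpace.exp B := by
  let f := (kroneckerAlgEquiv m n 𝕜).toAlgHom.comp Algebra.TensorProduct.includeRight
  have hf : ∀ M, f M = 1 ⊗ₖ M := fun M => by simp [f]
  rw [← hf, ← hf]
  open scoped Matrix.Norms.Operator in
  exact (NormedSpace.map_exp f f.toLinearMap.continuous_of_finiteDimensional B).symm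

theorem Matrix.exp_kronecker_exp (A : Matrix m m 𝕜) (B : Matrix n n 𝕜) :
    NormedSpace.exp A ⊗ₖ NormedSpace.exp B = NormedSpace.exp (A ⊗ₖ 1 + 1 ⊗ₖ B) := by
  have hcomm : Commute (A ⊗ₖ (1 : Matrix n n 𝕜)) ((1 : Matrix m m 𝕜) ⊗ₖ B) :=
    (Commute.one_right A).kronecker (Commute.one_left B)
  rw [Matrix.exp_add_of_commute _ _ hcomm, exp_kronecker_one, exp_one_kronecker,
    ← mul_kronecker_mul, mul_one, one_mul]

theorem Matrix.exp_smul_of_isIdempotentElem {P : Matrix m m ℂ} (hP : IsIdempotentElem P)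
    (c : ℂ) :
    NormedSpace.exp (c • P) = 1 + (Complex.exp c - 1) • P := by
  open scoped Matrix.Norms.Operator in
  exact NormedSpace.exp_smul_of_isIdempotentElem hP c

theorem Matrix.exp_smul_one (c : ℂ) :
    NormedSpace.exp (c • (1 : Matrix m m ℂ)) = Complex.exp c • 1 := by
  rw [exp_smul_of_isIdempotentElem IsIdempotentElem.one, sub_smul, one_smul, add_sub_cancel]

theorem Matrix.mul_exp_mul_of_mul_eq_neg {X A : Matrix m m 𝕜} (hX : X * X = 1)
    (hXA : X * A = -(A * X)) : X * NormedSpace.exp A * X = NormedSpace.exp (-A) := by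
  have hconj := Matrix.exp_conj X A ⟨⟨X, X, hX, hX⟩, rfl⟩
  rw [inv_eq_left_inv hX] at hconj
  rw [← hconj, hXA, neg_mul, mul_assoc, hX, mul_one]

end Kronecker

theorem σx_mul_σx : σx * σx = 1 := by
  simp [σx, one_fin_two]

theorem σz_mul_σz : σz * σz = 1 := by
  simp [σz, one_fin_two]

theorem σx_mul_σz : σx * σz = -(σz * σx) := by
  simp [σx, σz]

-- `projMinus = |−⟩⟨−|` and `projOne = |1⟩⟨1|`
def projMinus : Matrix (Fin 2) (Fin 2) ℂ := (2⁻¹ : ℂ) • (1 - σx)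
def projOne : Matrix (Fin 2) (Fin 2) ℂ := (2⁻¹ : ℂ) • (1 - σz)

theorem isIdempotentElem_projMinus : IsIdempotentElem projMinus :=
  isIdempotentElem_inv_two_smul_one_sub σx_mul_σx

theorem isIdempotentElem_projOne : IsIdempotentElem projOne :=
  isIdempotentElem_inv_two_smul_one_sub σz_mul_σz

theorem projOne_eq : projOne = !![0, 0; 0, 1] := by
  ext i j
  fin_cases i <;> fin_cases j <;> norm_num [projOne, σz]

theorem σx_eq_one_sub_projMinus : σx = 1 - (2 : ℂ) • projMinus := by
  rw [projMinus, smul_smul]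
  norm_num

theorem σx_kronecker_one_add_one_kronecker_σz_sub :
    σx ⊗ₖ 1 + 1 ⊗ₖ σz - σx ⊗ₖ σz = 1 - (4 : ℂ) • (projMinus ⊗ₖ projOne) := by
  rw [kronecker_one_add_one_kronecker_sub_kronecker, projMinus, projOne, smul_kronecker,
    kronecker_smul]
  module

theorem one_kronecker_σx_mul_ECRpow (θ : ℝ) :
    ((1 : Matrix (Fin 2) (Fin 2) ℂ) ⊗ₖ σx) * ECRpow θ =
      NormedSpace.exp ((-(I * θ / 4)) • (σx ⊗ₖ σz)) := by
  have hX : ((1 : Matrix (Fin 2) (Fin 2) ℂ) ⊗ₖ σx) * (1 ⊗ₖ σx) = 1 := by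
    rw [← mul_kronecker_mul, one_mul, σx_mul_σx, one_kronecker_one]
  have hXK : ((1 : Matrix (Fin 2) (Fin 2) ℂ) ⊗ₖ σx) * (σx ⊗ₖ σz) =
      -((σx ⊗ₖ σz) * (1 ⊗ₖ σx)) := by
    rw [← mul_kronecker_mul, ← mul_kronecker_mul, one_mul, mul_one, σx_mul_σz,
      ← neg_one_smul ℂ (σz * σx), kronecker_smul, neg_one_smul]
  have hXcK (c : ℂ) : ((1 : Matrix (Fin 2) (Fin 2) ℂ) ⊗ₖ σx) * (c • (σx ⊗ₖ σz)) =
      -((c • (σx ⊗ₖ σz)) * (1 ⊗ₖ σx)) := by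
    rw [mul_smul_comm, hXK, smul_neg, smul_mul_assoc]
  have hcomm (c d : ℂ) : Commute (c • (σx ⊗ₖ σz)) (d • (σx ⊗ₖ σz)) :=
    ((Commute.refl _).smul_left c).smul_right d
  rw [ECRpow, ← mul_assoc, ← mul_assoc, Matrix.mul_exp_mul_of_mul_eq_neg hX (hXcK _),
    ← neg_smul, ← Matrix.exp_add_of_commute _ _ (hcomm _ _), ← add_smul]
  congr 2
  ring

theorem exp_smul_Rx_neg (θ : ℝ) :
    Complex.exp (-(I * θ) / 2) • Rx (-θ) = 1 + (Complex.exp (-(I * θ)) - 1) • projMinus := by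
  have hexponent :
      (-(I * ((-θ : ℝ) : ℂ)) / 2) • σx = (I * θ / 2) • 1 + (-(I * θ)) • projMinus := by
    rw [σx_eq_one_sub_projMinus]
    push_cast
    module
  have hone : Complex.exp (-(I * θ) / 2) * Complex.exp (I * θ / 2) = 1 := by
    rw [← Complex.exp_add]
    ring_nf
    exact Complex.exp_zero
  rw [Rx, hexponent, Matrix.exp_add_of_commute _ _ ((Commute.one_left _).smul_left _),
    exp_smul_one, exp_smul_of_isIdempotentElem isIdempotentElem_projMinus, smul_mul_assoc,
    one_mul, smul_smul, hone, one_smul]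

theorem Cgate_eq (θ : ℝ) :
    Cgate θ = 1 + (Complex.exp (-(I * θ)) - 1) • (projMinus ⊗ₖ projOne) := by
  ext ⟨i, j⟩ ⟨k, l⟩
  simp only [Cgate, of_apply, exp_smul_Rx_neg]
  fin_cases j <;> fin_cases l <;> simp [projOne_eq, one_apply]

/-- (I⊗X)·ECR^{θ/π}·(e^{iθσx/4} ⊗ e^{iθσz/4}) = e^{iθ/4}·C(θ). -/
theorem stmt16 (θ : ℝ) :
    ((1 : Matrix (Fin 2) (Fin 2) ℂ) ⊗ₖ σx) * ECRpow θ *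
      (NormedSpace.exp ((Complex.I * (θ : ℂ) / 4) • σx) ⊗ₖ
        NormedSpace.exp ((Complex.I * (θ : ℂ) / 4) • σz)) =
    Complex.exp (Complex.I * (θ : ℂ) / 4) • Cgate θ := by
  set a : ℂ := I * θ / 4
  have hexponent : (-a) • (σx ⊗ₖ σz) + ((a • σx) ⊗ₖ 1 + 1 ⊗ₖ (a • σz)) =
      a • 1 + (-(I * θ)) • (projMinus ⊗ₖ projOne) := by
    rw [smul_kronecker, kronecker_smul]
    linear_combination (norm := module) a • σx_kronecker_one_add_one_kronecker_σz_sub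
  have hcomm : Commute ((-a) • (σx ⊗ₖ σz)) ((a • σx) ⊗ₖ 1 + 1 ⊗ₖ (a • σz)) :=
    (((Commute.refl σx).smul_right a).kronecker (Commute.one_right σz)).add_right
      ((Commute.one_right σx).kronecker ((Commute.refl σz).smul_right a)) |>.smul_left (-a)
  rw [one_kronecker_σx_mul_ECRpow, exp_kronecker_exp, ← Matrix.exp_add_of_commute _ _ hcomm,
    hexponent, Matrix.exp_add_of_commute _ _ ((Commute.one_left _).smul_left _), exp_smul_one,
    exp_smul_of_isIdempotentElem (isIdempotentElem_projMinus.kronecker isIdempotentElem_projOne),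
    Cgate_eq, smul_mul_assoc, one_mul]
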